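/- A finite simple graph G on n vertices is a threshold graph if and only if there is an ordering v_1,…,v_n of its vertices such that for every j ∈ {1,…,n}, the vertex v_j is either isolated or universal in the subgraph of G induced by {v_1,…,v_j}. -/

import Mathlib

open SimpleGraph

/-- The graph `2K₂`: two disjoint edges on four vertices. -/
def twoK2 : SimpleGraph (Fin 4) :=
  SimpleGraph.fromEdgeSet {s(0, 1), s(2, 3)}

/-- A graph is a threshold graph if it has no induced subgraph isomorphic to
`P₄`, `C₄`, or `2K₂`. -/
def IsThresholdGraph {V : Type*} (H : SimpleGraph V) : Prop :=
  IsEmpty (SimpleGraph.pathGraph 4 ↪g H) ∧ IsEmpty (SimpleGraph.cycleGraph 4 ↪g H) ∧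
    IsEmpty (twoK2 ↪g H)

/-- A set of vertices is independent if its members are pairwise nonadjacent. -/
def IsIndepSet {V : Type*} (G : SimpleGraph V) (s : Set V) : Prop :=
  s.Pairwise fun u v => ¬ G.Adj u v

/-- `G` has threshold-width at most `k`: there are `k` independent sets `N i` and a
threshold graph `H` on the same vertex set containing `G` such that every edge of `H`
not in `G` has both endpoints in a common `N i`. -/
def ThresholdWidthAtMost {V : Type*} (G : SimpleGraph V) (k : ℕ) : Prop :=
  ∃ (N : Fin k → Set V) (H : SimpleGraph V),
    (∀ i, _root_.IsIndepSet G (N i)) ∧ IsThresholdGraph H ∧ G ≤ H ∧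
      ∀ x y, H.Adj x y → ¬ G.Adj x y → ∃ i, x ∈ N i ∧ y ∈ N i

/-!
In a graph without induced `P₄`, `C₄` or `2K₂`, one cannot have `u ~ x` and `w ~ y` with
`u ≁ y` and `w ≁ x`: the four vertices would induce one of the three forbidden graphs, according
to the adjacencies `u ~ w` and `x ~ y`. So neighbourhoods are nested, a vertex of maximum degree
is universal unless some vertex is isolated, and deleting such a vertex and inducting gives the
ordering. Conversely, the last vertex (in the ordering) of any induced subgraph is isolated or
universal in it, while no vertex of `P₄`, `C₄` or `2K₂` is.
-/

instance : DecidableRel twoK2.Adj := fun _ _ => by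
  unfold twoK2; infer_instance

instance {n : ℕ} : DecidableRel (pathGraph n).Adj :=
  fun _ _ => decidable_of_iff' _ pathGraph_adj

namespace SimpleGraph

variable {V : Type*}

def IsIsolatedOrUniversal (G : SimpleGraph V) (v : V) : Prop :=
  (∀ w, ¬ G.Adj v w) ∨ ∀ w, w ≠ v → G.Adj v w

def IsEliminationOrdering (G : SimpleGraph V) {n : ℕ} (e : Fin n ≃ V) : Prop :=
  ∀ j, (∀ i < j, ¬ G.Adj (e j) (e i)) ∨ ∀ i < j, G.Adj (e j) (e i)

end SimpleGraph

section

variable {V W : Type*} {G : SimpleGraph V}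

lemma IsThresholdGraph.of_embedding {H : SimpleGraph W} (f : H ↪g G) (hG : IsThresholdGraph G) :
    IsThresholdGraph H :=
  ⟨⟨fun g => hG.1.false (f.comp g)⟩, ⟨fun g => hG.2.1.false (f.comp g)⟩,
    ⟨fun g => hG.2.2.false (f.comp g)⟩⟩

lemma IsThresholdGraph.adj_of_adj_of_adj_of_not_adj (hG : IsThresholdGraph G) {u w x y : V}
    (hux : G.Adj u x) (hwy : G.Adj w y) (huy : ¬ G.Adj u y) (hxw : x ≠ w) (hyu : y ≠ u) :
    G.Adj w x := by
  by_contra hwx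
  have huw_ne : u ≠ w := by rintro rfl; exact hwx hux
  have hxy_ne : x ≠ y := by rintro rfl; exact huy hux
  have embedding (F : SimpleGraph (Fin 4)) (f : Fin 4 → V) (hf : f.Injective)
      (hadj : ∀ a b, G.Adj (f a) (f b) ↔ F.Adj a b) : F ↪g G := ⟨⟨f, hf⟩, hadj _ _⟩
  obtain ⟨hP, hC, h2K⟩ := hG
  by_cases huw : G.Adj u w <;> by_cases hxy : G.Adj x y <;>
    [refine hC.false (embedding _ ![u, x, y, w] ?_ ?_);
      refine hP.false (embedding _ ![x, u, w, y] ?_ ?_);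
      refine hP.false (embedding _ ![u, x, y, w] ?_ ?_);
      refine h2K.false (embedding _ ![u, x, w, y] ?_ ?_)] <;>
    first
      | rw [← List.nodup_ofFn]; simp [hux.ne, hwy.ne, huw_ne, hxy_ne, hxw, hyu, Ne.symm]
      | intro a b; fin_cases a <;> fin_cases b <;>
          simp [hux, hux.symm, hwy, hwy.symm, huy, hwx, huw, hxy, G.adj_comm y u,
            G.adj_comm x w, G.adj_comm w u, G.adj_comm y x] <;> decide

lemma IsThresholdGraph.degree_lt_of_adj_of_not_adj [G.LocallyFinite]
    (hG : IsThresholdGraph G) {u w z : V} (hwz : G.Adj w z) (huz : ¬ G.Adj u z) (hzu : z ≠ u) :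
    G.degree u < G.degree w := by
  classical
  have hssub : (G.neighborFinset u).erase w ⊂ (G.neighborFinset w).erase u := by
    refine (Finset.ssubset_iff_of_subset fun x hx => ?_).2 ⟨z, ?_, ?_⟩
    · simp only [Finset.mem_erase, mem_neighborFinset] at hx ⊢
      exact ⟨hx.2.ne', hG.adj_of_adj_of_adj_of_not_adj hx.2 hwz huz hx.1 hzu⟩
    · simp [hzu, hwz]
    · simp [huz]
  have hcard := Finset.card_lt_card hssub
  rw [Finset.card_erase_eq_ite, Finset.card_erase_eq_ite] at hcard
  simp only [mem_neighborFinset, card_neighborFinset_eq_degree, G.adj_comm w u] at hcard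
  split_ifs at hcard <;> omega

lemma IsThresholdGraph.exists_isIsolatedOrUniversal [Finite V] [Nonempty V]
    (hG : IsThresholdGraph G) : ∃ v, G.IsIsolatedOrUniversal v := by
  classical
  have := Fintype.ofFinite V
  obtain ⟨u, hu⟩ := Finite.exists_max fun v => G.degree v
  by_cases huniv : ∀ z, z ≠ u → G.Adj u z
  · exact ⟨u, .inr huniv⟩
  obtain ⟨z, hzu, huz⟩ : ∃ z, z ≠ u ∧ ¬ G.Adj u z := by simpa using huniv
  exact ⟨z, .inl fun w hzw => (hu w).not_gt (hG.degree_lt_of_adj_of_not_adj hzw.symm huz hzu)⟩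

lemma SimpleGraph.IsEliminationOrdering.snoc [DecidableEq V] {n : ℕ} {v : V}
    (hv : G.IsIsolatedOrUniversal v) {e : Fin n ≃ {w // w ≠ v}}
    (he : (G.comap (Function.Embedding.subtype _)).IsEliminationOrdering e) :
    G.IsEliminationOrdering
      (finSuccEquivLast.trans (e.optionCongr.trans (.optionSubtypeNe v))) := by
  intro j
  induction j using Fin.lastCases with
  | last =>
    refine hv.imp (fun h i _ => by simpa using h _) fun h i hi => ?_
    obtain ⟨i, rfl⟩ := Fin.exists_castSucc_eq.2 hi.ne
    simpa using h _ (e i).2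
  | cast j =>
    refine (he j).imp (fun h i hi => ?_) fun h i hi => ?_ <;>
    · obtain ⟨i, rfl⟩ := Fin.exists_castSucc_eq.2 (hi.trans (Fin.castSucc_lt_last j)).ne
      simpa using h i (Fin.castSucc_lt_castSucc_iff.1 hi)

theorem IsThresholdGraph.exists_isEliminationOrdering [Fintype V] {n : ℕ}
    (hV : Fintype.card V = n) (hG : IsThresholdGraph G) :
    ∃ e : Fin n ≃ V, G.IsEliminationOrdering e := by
  induction n generalizing V with
  | zero => exact ⟨(Fintype.equivFinOfCardEq hV).symm, fun j => j.elim0⟩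
  | succ n ih =>
    classical
    have : Nonempty V := Fintype.card_pos_iff.1 (by omega)
    obtain ⟨v, hv⟩ := hG.exists_isIsolatedOrUniversal
    have hV' : Fintype.card {w // w ≠ v} = n := by
      have := Fintype.card_congr (Equiv.optionSubtypeNe v)
      rw [Fintype.card_option] at this
      omega
    obtain ⟨e, he⟩ := ih hV' (hG.of_embedding (Embedding.comap (.subtype _) G))
    exact ⟨_, he.snoc hv⟩

lemma SimpleGraph.IsEliminationOrdering.exists_isIsolatedOrUniversal_of_embedding {n : ℕ}
    {e : Fin n ≃ V} (he : G.IsEliminationOrdering e) [Finite W] [Nonempty W]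
    {F : SimpleGraph W} (f : F ↪g G) : ∃ a, F.IsIsolatedOrUniversal a := by
  obtain ⟨a, ha⟩ := Finite.exists_max fun a => e.symm (f a)
  have hlt {b : W} (hba : b ≠ a) : e.symm (f b) < e.symm (f a) :=
    (ha b).lt_of_ne ((e.symm.injective.comp f.injective).ne hba)
  refine ⟨a, (he (e.symm (f a))).imp (fun h b hab => ?_) fun h b hba => ?_⟩
  · simpa [hab] using h _ (hlt (F.ne_of_adj hab).symm)
  · simpa using h _ (hlt hba)

lemma SimpleGraph.IsEliminationOrdering.isThresholdGraph {n : ℕ} {e : Fin n ≃ V}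
    (he : G.IsEliminationOrdering e) : IsThresholdGraph G := by
  have key (F : SimpleGraph (Fin 4)) (hF : ∀ a, ¬ F.IsIsolatedOrUniversal a) :
      IsEmpty (F ↪g G) :=
    ⟨fun f => (he.exists_isIsolatedOrUniversal_of_embedding f).elim hF⟩
  refine ⟨key _ ?_, key _ ?_, key _ ?_⟩ <;> unfold IsIsolatedOrUniversal <;> decide

end

/-- A finite graph is threshold iff there is an ordering of its vertices in which each
vertex is isolated or universal in the subgraph induced by it and its predecessors. -/
theorem isThresholdGraph_iff_elimination_ordering {V : Type*} [Fintype V]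
    (G : SimpleGraph V) :
    IsThresholdGraph G ↔
      ∃ e : Fin (Fintype.card V) ≃ V,
        ∀ j : Fin (Fintype.card V),
          (∀ i < j, ¬ G.Adj (e j) (e i)) ∨ (∀ i < j, G.Adj (e j) (e i)) :=
  ⟨fun hG => hG.exists_isEliminationOrdering rfl,
    fun ⟨_, he⟩ => IsEliminationOrdering.isThresholdGraph he⟩
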